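/- If in the Frank–Wolfe algorithm the initialization is x(t_0) = x₀ ∈ argmin_{x ∈ P} ‖x‖_∞ (dropping the assumptions 0 ∈ P and F(0) = 0), then there is an absolute constant C > 0 such that for all T ≥ 2 the best iterate satisfies max_{0 ≤ j ≤ T} F(x(t_j)) − (1/4)F(x₀) ≥ (1/4)(1 − min_{x ∈ P} ‖x‖_∞) F(x*) − C·nL/(ln T)². -/

import Mathlib

/-!
Along nonnegative directions a DR-submodular `F` is concave: for `x ≤ y` in the box,
`⟨∇F(y), y - x⟩ ≤ F(y) - F(x) ≤ ⟨∇F(x), y - x⟩`. The right inequality comes from splitting the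
move into many small coordinate steps, each dominated by DR-submodularity, the smoothness error
vanishing in the limit; the left one is the right one for the reflection `z ↦ F(1 - z)`. With the
lattice identity `x ⊔ y + x ⊓ y = x + y` and nonnegativity this gives the Frank–Wolfe gap bound
`⟨∇F(x), y - x⟩ ≥ (1 - ‖x‖∞) F(y) - 2 F(x)`.

With `S_j = H_T + H_j` the step of the algorithm is `1 - e^{…} = (1/(j+1)) / S_{j+1}`, and
`S_j (1 - ‖x_j‖∞) ≥ H_T (1 - ‖x₀‖∞)`. Put `c = (1 - ‖x₀‖∞) F(x*)` and take `C = 1`. If the claim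
fails for every `j`, then (first at `j = 0`, then everywhere) all iterates have value below `c/3`.
Then the gap bound and smoothness make `S_j² F(x_j)` grow by at least
`H_T c/(j+1) - nL/(2(j+1)²)` per step, and `S_T = 2 H_T`, `∑ 1/k² ≤ 2`, `ln T ≤ H_T` show that the
claim holds at `j = T` after all.
-/

/-- The harmonic number `H j = ∑_{k=1}^j 1/k` (with `H 0 = 0`). -/
noncomputable def harmonicNum (j : ℕ) : ℝ := ∑ k ∈ Finset.range j, (1 : ℝ) / (k + 1)

/-- `H_{2,j} = ∑_{k=1}^j 1/k²`. -/
noncomputable def harmonicNum2 (j : ℕ) : ℝ := ∑ k ∈ Finset.range j, (1 : ℝ) / ((k : ℝ) + 1) ^ 2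

/-- The time values `t_j = 1/(1 - ln(1 + H_j/H_T)) - 1` of the Frank–Wolfe algorithm. -/
noncomputable def fwTime (T j : ℕ) : ℝ :=
  1 / (1 - Real.log (1 + harmonicNum j / harmonicNum T)) - 1

/-- The Frank–Wolfe step ratio `e^{-1/(1+t_j) + 1/(1+t_{j+1})}`. -/
noncomputable def fwRatio (T j : ℕ) : ℝ :=
  Real.exp (-(1 / (1 + fwTime T j)) + 1 / (1 + fwTime T (j + 1)))

/-- `√a_{t_j} = e^{t_j/(1+t_j)}`. -/
noncomputable def fwSqa (T j : ℕ) : ℝ := Real.exp (fwTime T j / (1 + fwTime T j))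

/-- `F : [0,1]^n → ℝ` is DR-submodular: for all `x ≤ y` in `[0,1]^n`, coordinates `i` and
`a > 0` with `x + a·e_i, y + a·e_i ∈ [0,1]^n`, one has
`F(x + a·e_i) - F(x) ≥ F(y + a·e_i) - F(y)`. -/
def DRSubmodular {n : ℕ} (F : (Fin n → ℝ) → ℝ) : Prop :=
  ∀ x y : Fin n → ℝ, x ∈ Set.Icc (0 : Fin n → ℝ) 1 → y ∈ Set.Icc (0 : Fin n → ℝ) 1 →
    x ≤ y → ∀ i : Fin n, ∀ a : ℝ, 0 < a →
      x + a • (Pi.single i 1 : Fin n → ℝ) ∈ Set.Icc (0 : Fin n → ℝ) 1 →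
      y + a • (Pi.single i 1 : Fin n → ℝ) ∈ Set.Icc (0 : Fin n → ℝ) 1 →
      F (y + a • (Pi.single i 1 : Fin n → ℝ)) - F y ≤
        F (x + a • (Pi.single i 1 : Fin n → ℝ)) - F x

/-- The continuous linear map `y ↦ ⟨g, y⟩ = ∑ i, g i * y i` on `ℝⁿ`. -/
noncomputable def gradCLM {n : ℕ} (g : Fin n → ℝ) : (Fin n → ℝ) →L[ℝ] ℝ :=
  ∑ i, g i • (ContinuousLinearMap.proj i : (Fin n → ℝ) →L[ℝ] ℝ)

/-- `gradF` is the gradient of `F` on the box `[0,1]^n`: at each point of the box, `F` is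
differentiable within the box with derivative `y ↦ ⟨gradF z, y⟩`. -/
def HasGradientOnBox {n : ℕ} (F : (Fin n → ℝ) → ℝ) (gradF : (Fin n → ℝ) → Fin n → ℝ) : Prop :=
  ∀ z ∈ Set.Icc (0 : Fin n → ℝ) 1, HasFDerivWithinAt F (gradCLM (gradF z)) (Set.Icc 0 1) z

lemma harmonicNum_nonneg (j : ℕ) : 0 ≤ harmonicNum j :=
  Finset.sum_nonneg fun _ _ => by positivity

lemma harmonicNum_succ (j : ℕ) : harmonicNum (j + 1) = harmonicNum j + 1 / (j + 1) := by
  simp [harmonicNum, Finset.sum_range_succ]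

lemma harmonicNum_mono : Monotone harmonicNum := fun _ _ hab =>
  Finset.sum_le_sum_of_subset_of_nonneg (Finset.range_subset_range.2 hab) fun _ _ _ => by positivity

lemma harmonicNum_pos {T : ℕ} (hT : 0 < T) : 0 < harmonicNum T :=
  calc (0 : ℝ) < harmonicNum 1 := by norm_num [harmonicNum]
    _ ≤ harmonicNum T := harmonicNum_mono hT

lemma harmonicNum_eq_harmonic (j : ℕ) : harmonicNum j = harmonic j := by
  simp [harmonicNum, harmonic]

lemma log_le_harmonicNum (T : ℕ) : Real.log T ≤ harmonicNum T := by
  rcases Nat.eq_zero_or_pos T with rfl | hT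
  · simp [harmonicNum]
  calc Real.log T ≤ Real.log ↑(T + 1) := Real.log_le_log (by positivity) (by simp)
    _ ≤ harmonicNum T := harmonicNum_eq_harmonic T ▸ log_add_one_le_harmonic T

lemma harmonicNum2_le_two (j : ℕ) : harmonicNum2 j ≤ 2 := by
  have h := sum_Ioo_inv_sq_le (α := ℝ) 0 (j + 1)
  rw [harmonicNum2, Finset.range_eq_Ico]
  rw [← Finset.Ico_add_one_left_eq_Ioo, ← Finset.sum_Ico_add' (c := 1)] at h
  simpa using h

lemma harmonicNum2_succ (j : ℕ) :
    harmonicNum2 (j + 1) = harmonicNum2 j + 1 / ((j : ℝ) + 1) ^ 2 := by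
  simp [harmonicNum2, Finset.sum_range_succ]

noncomputable def fwWeight (T j : ℕ) : ℝ := harmonicNum T + harmonicNum j

lemma fwWeight_pos {T : ℕ} (hT : 0 < T) (j : ℕ) : 0 < fwWeight T j :=
  add_pos_of_pos_of_nonneg (harmonicNum_pos hT) (harmonicNum_nonneg j)

lemma fwWeight_succ (T j : ℕ) : fwWeight T (j + 1) = fwWeight T j + 1 / (j + 1) := by
  rw [fwWeight, fwWeight, harmonicNum_succ, add_assoc]

lemma one_div_one_add_fwTime (T j : ℕ) :
    1 / (1 + fwTime T j) = 1 - Real.log (1 + harmonicNum j / harmonicNum T) := by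
  rw [fwTime, add_sub_cancel, one_div_one_div]

lemma fwRatio_eq_div {T : ℕ} (hT : 0 < T) (j : ℕ) :
    fwRatio T j = fwWeight T j / fwWeight T (j + 1) := by
  have hH := harmonicNum_pos hT
  have hpos (k : ℕ) : 0 < 1 + harmonicNum k / harmonicNum T := by
    have := harmonicNum_nonneg k
    positivity
  rw [fwRatio, one_div_one_add_fwTime, one_div_one_add_fwTime, neg_sub, sub_add_sub_cancel,
    Real.exp_sub, Real.exp_log (hpos j), Real.exp_log (hpos (j + 1)), fwWeight, fwWeight]
  field_simp

lemma fwRatio_mem_Icc {T : ℕ} (hT : 0 < T) (j : ℕ) : fwRatio T j ∈ Set.Icc 0 1 := by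
  rw [fwRatio_eq_div hT]
  refine ⟨div_nonneg (fwWeight_pos hT j).le (fwWeight_pos hT _).le,
    div_le_one_of_le₀ ?_ (fwWeight_pos hT _).le⟩
  rw [fwWeight_succ]
  have : (0 : ℝ) ≤ 1 / (j + 1) := by positivity
  linarith

lemma one_sub_fwRatio {T : ℕ} (hT : 0 < T) (j : ℕ) :
    1 - fwRatio T j = 1 / (j + 1) / fwWeight T (j + 1) := by
  rw [fwRatio_eq_div hT, eq_div_iff (fwWeight_pos hT _).ne', sub_mul,
    div_mul_cancel₀ _ (fwWeight_pos hT _).ne', fwWeight_succ]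
  ring

lemma le_of_forall_le_add_div_nat {a b c : ℝ} (h : ∀ m : ℕ, 0 < m → a ≤ b + c / m) : a ≤ b := by
  have hlim : Filter.Tendsto (fun m : ℕ => b + c / m) Filter.atTop (nhds b) := by
    simpa using tendsto_const_nhds.add (tendsto_const_div_atTop_nhds_zero_nat c)
  exact ge_of_tendsto hlim (Filter.eventually_atTop.2 ⟨1, h⟩)

section Box

variable {n : ℕ}

lemma mem_box_apply {z : Fin n → ℝ} (hz : z ∈ Set.Icc 0 1) (i : Fin n) : 0 ≤ z i ∧ z i ≤ 1 :=
  ⟨hz.1 i, hz.2 i⟩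

lemma add_smul_single_mem_box {z : Fin n → ℝ} (hz : z ∈ Set.Icc 0 1) {i : Fin n} {c : ℝ}
    (hc : 0 ≤ c) (hci : z i + c ≤ 1) :
    z + c • (Pi.single i 1 : Fin n → ℝ) ∈ Set.Icc (0 : Fin n → ℝ) 1 := by
  refine ⟨fun j => ?_, fun j => ?_⟩ <;> by_cases h : j = i
  · subst h; simpa using add_nonneg (hz.1 j) hc
  · simpa [h] using hz.1 j
  · subst h; simpa using hci
  · simpa [h] using hz.2 j

lemma one_sub_mem_box {z : Fin n → ℝ} (hz : z ∈ Set.Icc 0 1) :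
    1 - z ∈ Set.Icc (0 : Fin n → ℝ) 1 :=
  ⟨sub_nonneg.2 hz.2, sub_le_self 1 hz.1⟩

lemma norm_le_one_of_mem_box {z : Fin n → ℝ} (hz : z ∈ Set.Icc 0 1) : ‖z‖ ≤ 1 :=
  (pi_norm_le_iff_of_nonneg zero_le_one).2 fun i =>
    abs_le.2 ⟨by linarith [(mem_box_apply hz i).1], (mem_box_apply hz i).2⟩

lemma sum_sq_sub_le_of_mem_box {z w : Fin n → ℝ} (hz : z ∈ Set.Icc 0 1) (hw : w ∈ Set.Icc 0 1) :
    ∑ i, (w i - z i) ^ 2 ≤ n := by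
  calc ∑ i, (w i - z i) ^ 2 ≤ ∑ _i : Fin n, (1 : ℝ) := Finset.sum_le_sum fun i _ => by
        have := mem_box_apply hz i; have := mem_box_apply hw i
        nlinarith
    _ = n := by simp

end Box

def SmoothOnBox {n : ℕ} (F : (Fin n → ℝ) → ℝ) (gradF : (Fin n → ℝ) → Fin n → ℝ) (L : ℝ) : Prop :=
  ∀ z ∈ Set.Icc (0 : Fin n → ℝ) 1, ∀ w ∈ Set.Icc (0 : Fin n → ℝ) 1,
    |F w - F z - ∑ i, gradF z i * (w i - z i)| ≤ L / 2 * ∑ i, (w i - z i) ^ 2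

lemma SmoothOnBox.comp_one_sub {n : ℕ} {F : (Fin n → ℝ) → ℝ} {gradF : (Fin n → ℝ) → Fin n → ℝ}
    {L : ℝ} (hsm : SmoothOnBox F gradF L) :
    SmoothOnBox (fun z => F (1 - z)) (fun z => -gradF (1 - z)) L := by
  intro z hz w hw
  convert hsm (1 - z) (one_sub_mem_box hz) (1 - w) (one_sub_mem_box hw) using 3
  · exact Finset.sum_congr rfl fun i _ => by simp only [Pi.neg_apply, Pi.sub_apply]; ring
  · simp only [Pi.sub_apply]; ring

lemma SmoothOnBox.le_apply_combo {n : ℕ} {F : (Fin n → ℝ) → ℝ}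
    {gradF : (Fin n → ℝ) → Fin n → ℝ} {L : ℝ} (hsm : SmoothOnBox F gradF L) (hL : 0 ≤ L)
    {x v : Fin n → ℝ} (hx : x ∈ Set.Icc 0 1) (hv : v ∈ Set.Icc 0 1) {ρ : ℝ} (hρ : ρ ∈ Set.Icc 0 1) :
    F x + (1 - ρ) * ∑ i, gradF x i * (v i - x i) - L / 2 * ((1 - ρ) ^ 2 * n)
      ≤ F (ρ • x + (1 - ρ) • v) := by
  have hdiff (i : Fin n) : (ρ • x + (1 - ρ) • v) i - x i = (1 - ρ) * (v i - x i) := by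
    simp only [Pi.add_apply, Pi.smul_apply, smul_eq_mul]; ring
  have key := (abs_le.1 (hsm x hx _ (convex_Icc 0 1 hx hv hρ.1 (sub_nonneg.2 hρ.2) (by ring)))).1
  simp only [hdiff, mul_pow, ← Finset.mul_sum, mul_left_comm (gradF x _)] at key
  have := mul_le_mul_of_nonneg_left (mul_le_mul_of_nonneg_left (sum_sq_sub_le_of_mem_box hx hv)
    (sq_nonneg (1 - ρ))) (by linarith : 0 ≤ L / 2)
  linarith

namespace DRSubmodular

variable {n : ℕ} {F : (Fin n → ℝ) → ℝ} {gradF : (Fin n → ℝ) → Fin n → ℝ} {L : ℝ}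

lemma add_smul_single_sub_le_mul (hF : DRSubmodular F) {x z : Fin n → ℝ}
    (hx : x ∈ Set.Icc 0 1) (hz : z ∈ Set.Icc 0 1) (hxz : x ≤ z) {i : Fin n} {a : ℝ} (ha : 0 ≤ a)
    (m : ℕ) (hzm : z + (m * a) • (Pi.single i 1 : Fin n → ℝ) ∈ Set.Icc 0 1) :
    F (z + (m * a) • (Pi.single i 1 : Fin n → ℝ)) - F z
      ≤ m * (F (x + a • (Pi.single i 1 : Fin n → ℝ)) - F x) := by
  induction m with
  | zero => simp
  | succ m ih =>
    rcases ha.eq_or_lt with rfl | ha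
    · simp
    have hzi : z i + (m + 1) * a ≤ 1 := by simpa using (mem_box_apply hzm i).2
    have hy : z + (m * a) • (Pi.single i 1 : Fin n → ℝ) ∈ Set.Icc 0 1 :=
      add_smul_single_mem_box hz (by positivity) (by linarith)
    have hxa : x + a • (Pi.single i 1 : Fin n → ℝ) ∈ Set.Icc 0 1 :=
      add_smul_single_mem_box hx ha.le (by nlinarith [hxz i, Nat.cast_nonneg (α := ℝ) m])
    have hsplit : z + ((m + 1 : ℕ) * a) • (Pi.single i 1 : Fin n → ℝ)
        = z + (m * a) • (Pi.single i 1 : Fin n → ℝ) + a • (Pi.single i 1 : Fin n → ℝ) := by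
      push_cast; rw [add_assoc, ← add_smul]; ring_nf
    have hxy : x ≤ z + (m * a) • (Pi.single i 1 : Fin n → ℝ) := hxz.trans
      (le_add_of_nonneg_right (smul_nonneg (by positivity) (Pi.single_nonneg.2 zero_le_one)))
    have hstep := hF x _ hx hy hxy i a ha hxa (hsplit ▸ hzm)
    rw [hsplit]
    push_cast
    linarith [ih hy]

lemma add_smul_single_sub_le (hF : DRSubmodular F) (hsm : SmoothOnBox F gradF L) {x z : Fin n → ℝ}
    (hx : x ∈ Set.Icc 0 1) (hz : z ∈ Set.Icc 0 1) (hxz : x ≤ z) {i : Fin n} {d : ℝ} (hd : 0 ≤ d)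
    (hzd : z + d • (Pi.single i 1 : Fin n → ℝ) ∈ Set.Icc 0 1) :
    F (z + d • (Pi.single i 1 : Fin n → ℝ)) - F z ≤ gradF x i * d := by
  -- split the move into `m` steps of length `a = d / m`; the quadratic errors sum to `O(1/m)`
  refine le_of_forall_le_add_div_nat (c := L / 2 * d ^ 2) fun m hm => ?_
  have hm' : (0 : ℝ) < m := Nat.cast_pos.2 hm
  set a := d / m
  have hma : (m : ℝ) * a = d := mul_div_cancel₀ d hm'.ne'
  have hxa : x + a • (Pi.single i 1 : Fin n → ℝ) ∈ Set.Icc 0 1 := by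
    refine add_smul_single_mem_box hx (by positivity) ?_
    have : a ≤ d := div_le_self hd (by exact_mod_cast hm)
    linarith [hxz i, (by simpa using (mem_box_apply hzd i).2 : z i + d ≤ 1)]
  have hone : F (x + a • (Pi.single i 1 : Fin n → ℝ)) - F x ≤ gradF x i * a + L / 2 * a ^ 2 := by
    have := (abs_le.1 (hsm x hx _ hxa)).2
    simp [Pi.single_apply] at this
    linarith
  calc F (z + d • (Pi.single i 1 : Fin n → ℝ)) - F z
      ≤ m * (F (x + a • (Pi.single i 1 : Fin n → ℝ)) - F x) := by
        have := add_smul_single_sub_le_mul hF hx hz hxz (by positivity) m (hma ▸ hzd)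
        rwa [hma] at this
    _ ≤ m * (gradF x i * a + L / 2 * a ^ 2) := by gcongr
    _ = gradF x i * d + L / 2 * d ^ 2 / m := by rw [← hma]; field_simp

lemma piecewise_insert_eq_add_smul_single {x y : Fin n → ℝ} {s : Finset (Fin n)} {i : Fin n}
    (hi : i ∉ s) :
    (insert i s).piecewise y x = s.piecewise y x + (y i - x i) • (Pi.single i 1 : Fin n → ℝ) := by
  ext j
  by_cases h : j = i
  · subst h; simp [Finset.piecewise_eq_of_notMem _ _ _ hi]
  · simp [h]

lemma sub_le_inner (hF : DRSubmodular F) (hsm : SmoothOnBox F gradF L) {x y : Fin n → ℝ}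
    (hx : x ∈ Set.Icc 0 1) (hy : y ∈ Set.Icc 0 1) (hxy : x ≤ y) :
    F y - F x ≤ ∑ i, gradF x i * (y i - x i) := by
  -- raise the coordinates of `x` to those of `y` one at a time
  suffices h : ∀ s : Finset (Fin n), F (s.piecewise y x) - F x ≤ ∑ i ∈ s, gradF x i * (y i - x i) by
    simpa using h Finset.univ
  intro s
  induction s using Finset.induction_on with
  | empty => simp
  | insert i s hi ih =>
    have hz := Finset.piecewise_mem_Icc' (s := s) hxy
    have hzy := Finset.piecewise_mem_Icc' (s := insert i s) hxy
    rw [piecewise_insert_eq_add_smul_single hi] at hzy ⊢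
    have hstep := add_smul_single_sub_le hF hsm hx ⟨hx.1.trans hz.1, hz.2.trans hy.2⟩ hz.1
      (sub_nonneg.2 (hxy i)) ⟨hx.1.trans hzy.1, hzy.2.trans hy.2⟩
    rw [Finset.sum_insert hi]
    linarith

lemma comp_one_sub (hF : DRSubmodular F) : DRSubmodular fun z => F (1 - z) := by
  intro x y hx hy hxy i a ha hxa hya
  have hcancel (p : Fin n → ℝ) :
      1 - (p + a • (Pi.single i 1 : Fin n → ℝ)) + a • (Pi.single i 1 : Fin n → ℝ) = 1 - p := by
    abel
  have key := hF _ _ (one_sub_mem_box hya) (one_sub_mem_box hxa) (by gcongr) i a ha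
    ((hcancel y).symm ▸ one_sub_mem_box hy) ((hcancel x).symm ▸ one_sub_mem_box hx)
  simp only [hcancel] at key
  linarith

lemma inner_le_sub (hF : DRSubmodular F) (hsm : SmoothOnBox F gradF L) {x y : Fin n → ℝ}
    (hx : x ∈ Set.Icc 0 1) (hy : y ∈ Set.Icc 0 1) (hxy : x ≤ y) :
    ∑ i, gradF y i * (y i - x i) ≤ F y - F x := by
  have key := hF.comp_one_sub.sub_le_inner hsm.comp_one_sub (one_sub_mem_box hy)
    (one_sub_mem_box hx) (sub_le_sub_left hxy 1)
  have hsum : ∑ i, -gradF y i * ((1 - x) i - (1 - y) i) = -∑ i, gradF y i * (y i - x i) := by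
    rw [← Finset.sum_neg_distrib]
    exact Finset.sum_congr rfl fun i _ => by simp only [Pi.sub_apply]; ring
  simp only [sub_sub_cancel, Pi.neg_apply] at key
  linarith

lemma combo_le_apply_combo (hF : DRSubmodular F) (hsm : SmoothOnBox F gradF L) {x y : Fin n → ℝ}
    (hx : x ∈ Set.Icc 0 1) (hy : y ∈ Set.Icc 0 1) (hxy : x ≤ y) {a b : ℝ} (ha : 0 ≤ a)
    (hb : 0 ≤ b) (hab : a + b = 1) :
    a * F x + b * F y ≤ F (a • x + b • y) := by
  set w := a • x + b • y
  have hw : w ∈ Set.Icc 0 1 := convex_Icc 0 1 hx hy ha hb hab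
  have hyw (i : Fin n) : y i - w i = a * (y i - x i) := by
    simp only [w, Pi.add_apply, Pi.smul_apply, smul_eq_mul]; linear_combination -y i * hab
  have hwx (i : Fin n) : w i - x i = b * (y i - x i) := by
    simp only [w, Pi.add_apply, Pi.smul_apply, smul_eq_mul]; linear_combination x i * hab
  have hxw : x ≤ w := fun i => by nlinarith [hwx i, hxy i]
  have hwy : w ≤ y := fun i => by nlinarith [hyw i, hxy i]
  set g := ∑ i, gradF w i * (y i - x i)
  have hup : F y - F w ≤ a * g :=
    calc F y - F w ≤ ∑ i, gradF w i * (y i - w i) := hF.sub_le_inner hsm hw hy hwy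
      _ = a * g := by
        simp only [hyw, g, Finset.mul_sum]; exact Finset.sum_congr rfl fun i _ => by ring
  have hdown : b * g ≤ F w - F x :=
    calc b * g = ∑ i, gradF w i * (w i - x i) := by
          simp only [hwx, g, Finset.mul_sum]; exact Finset.sum_congr rfl fun i _ => by ring
      _ ≤ F w - F x := hF.inner_le_sub hsm hx hw hxw
  obtain rfl : a = 1 - b := by linarith
  nlinarith [mul_le_mul_of_nonneg_left hup hb, mul_le_mul_of_nonneg_left hdown ha]

lemma mul_le_sup (hF : DRSubmodular F) (hnn : ∀ z ∈ Set.Icc (0 : Fin n → ℝ) 1, 0 ≤ F z)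
    (hsm : SmoothOnBox F gradF L) {z q : Fin n → ℝ} (hz : z ∈ Set.Icc 0 1)
    (hq : q ∈ Set.Icc 0 1) :
    (1 - ‖z‖) * F q ≤ F (z ⊔ q) := by
  set θ := ‖z‖
  rcases (norm_nonneg z : 0 ≤ θ).eq_or_lt with hθ | hθ
  · obtain rfl : z = 0 := norm_eq_zero.1 hθ.symm
    simp [θ, sup_eq_right.2 hq.1]
  -- `z ⊔ q` lies on the segment from `q` to `τ`, at parameter `θ`
  set τ := q + θ⁻¹ • (z ⊔ q - q)
  have hcomb : (1 - θ) • q + θ • τ = z ⊔ q := by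
    rw [smul_add, smul_smul, mul_inv_cancel₀ hθ.ne', one_smul]
    module
  have hqτ : q ≤ τ :=
    le_add_of_nonneg_right (smul_nonneg (inv_nonneg.2 hθ.le) (sub_nonneg.2 le_sup_right))
  have hτ : τ ∈ Set.Icc 0 1 := by
    refine ⟨hq.1.trans hqτ, fun i => ?_⟩
    have hzi : z i ≤ θ := (le_abs_self _).trans (norm_le_pi_norm z i)
    have hqi := mem_box_apply hq i
    have hθ1 := norm_le_one_of_mem_box hz
    show q i + θ⁻¹ * (max (z i) (q i) - q i) ≤ 1
    rw [← div_eq_inv_mul, ← le_sub_iff_add_le', div_le_iff₀ hθ]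
    rcases le_total (z i) (q i) with h | h
    · rw [max_eq_right h]; nlinarith
    · rw [max_eq_left h]; nlinarith
  have := hF.combo_le_apply_combo hsm hq hτ hqτ (sub_nonneg.2 (norm_le_one_of_mem_box hz)) hθ.le
    (sub_add_cancel 1 θ)
  rw [hcomb] at this
  nlinarith [hnn τ hτ]

lemma sup_add_inf_sub_le_inner (hF : DRSubmodular F) (hsm : SmoothOnBox F gradF L)
    {p q : Fin n → ℝ} (hp : p ∈ Set.Icc 0 1) (hq : q ∈ Set.Icc 0 1) :
    F (p ⊔ q) + F (p ⊓ q) - 2 * F p ≤ ∑ i, gradF p i * (q i - p i) := by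
  have hup := hF.sub_le_inner hsm hp ⟨hp.1.trans le_sup_left, sup_le hp.2 hq.2⟩ le_sup_left
  have hdown := hF.inner_le_sub hsm ⟨le_inf hp.1 hq.1, inf_le_left.trans hp.2⟩ hp inf_le_left
  have hsum : ∑ i, gradF p i * ((p ⊔ q) i - p i) - ∑ i, gradF p i * (p i - (p ⊓ q) i)
      = ∑ i, gradF p i * (q i - p i) := by
    rw [← Finset.sum_sub_distrib]
    exact Finset.sum_congr rfl fun i _ => by
      simp only [Pi.sup_apply, Pi.inf_apply]
      linear_combination gradF p i * max_add_min (p i) (q i)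
  linarith

lemma sub_two_mul_le_inner (hF : DRSubmodular F) (hnn : ∀ z ∈ Set.Icc (0 : Fin n → ℝ) 1, 0 ≤ F z)
    (hsm : SmoothOnBox F gradF L) {x y : Fin n → ℝ} (hx : x ∈ Set.Icc 0 1)
    (hy : y ∈ Set.Icc 0 1) :
    (1 - ‖x‖) * F y - 2 * F x ≤ ∑ i, gradF x i * (y i - x i) := by
  have := hF.sup_add_inf_sub_le_inner hsm hx hy
  have := hF.mul_le_sup hnn hsm hx hy
  have := hnn _ ⟨le_inf hx.1 hy.1, inf_le_left.trans hx.2⟩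
  linarith

end DRSubmodular

lemma mul_one_sub_norm_le {E : Type*} [SeminormedAddCommGroup E] [NormedSpace ℝ E] {ρ : ℝ}
    (hρ : ρ ∈ Set.Icc 0 1) (x : E) {v : E} (hv : ‖v‖ ≤ 1) :
    ρ * (1 - ‖x‖) ≤ 1 - ‖ρ • x + (1 - ρ) • v‖ := by
  have h1ρ : 0 ≤ 1 - ρ := sub_nonneg.2 hρ.2
  have := norm_add_le (ρ • x) ((1 - ρ) • v)
  rw [norm_smul_of_nonneg hρ.1, norm_smul_of_nonneg h1ρ] at this
  nlinarith

lemma lyapunov_step {S h H c G D K G' : ℝ} (hS : 0 < S) (hh : 0 < h) (hHS : S ≤ 2 * H)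
    (hc : 0 ≤ c) (hG : G ≤ c / 2) (hD : H / S * c - 2 * G ≤ D)
    (hG' : G + h / (S + h) * D - K * (h / (S + h)) ^ 2 ≤ G') :
    S ^ 2 * G + h * H * c - K * h ^ 2 ≤ (S + h) ^ 2 * G' := by
  have hSh : 0 < S + h := by linarith
  have hexpand : (S + h) ^ 2 * (G + h / (S + h) * D - K * (h / (S + h)) ^ 2)
      = (S + h) ^ 2 * G + h * (S + h) * D - K * h ^ 2 := by
    field_simp
  have h1 := mul_le_mul_of_nonneg_left hG' (sq_nonneg (S + h))
  have h2 := mul_le_mul_of_nonneg_left hD (by positivity : 0 ≤ h * (S + h))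
  have h3 : H / S * c * S = H * c := by field_simp
  have hr : 1 / 2 ≤ H / S := by rw [le_div_iff₀ hS]; linarith
  have h4 : c / 2 ≤ H / S * c := by nlinarith
  nlinarith [mul_nonneg (sq_nonneg h) (by linarith : 0 ≤ H / S * c - G)]

structure IsFrankWolfeRun {n : ℕ} (P : Set (Fin n → ℝ)) (gradF : (Fin n → ℝ) → Fin n → ℝ)
    (T : ℕ) (x v : ℕ → Fin n → ℝ) : Prop where
  mem : ∀ j < T, v j ∈ P
  lmo : ∀ j < T, ∀ w ∈ P, ∑ i, gradF (x j) i * w i ≤ ∑ i, gradF (x j) i * v j i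
  step : ∀ j < T, x (j + 1) = fwRatio T j • x j + (1 - fwRatio T j) • v j

namespace IsFrankWolfeRun

variable {n : ℕ} {P : Set (Fin n → ℝ)} {F : (Fin n → ℝ) → ℝ} {gradF : (Fin n → ℝ) → Fin n → ℝ}
  {L : ℝ} {T : ℕ} {x v : ℕ → Fin n → ℝ}

lemma mem_of_le (hrun : IsFrankWolfeRun P gradF T x v) (hT : 0 < T) (hP : Convex ℝ P)
    (h0 : x 0 ∈ P) {j : ℕ} (hj : j ≤ T) : x j ∈ P := by
  induction j with
  | zero => exact h0
  | succ j ih =>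
    have hρ := fwRatio_mem_Icc hT j
    rw [hrun.step j hj]
    exact hP (ih (by omega)) (hrun.mem j hj) hρ.1 (sub_nonneg.2 hρ.2) (add_sub_cancel _ _)

lemma harmonicNum_mul_le_fwWeight_mul (hrun : IsFrankWolfeRun P gradF T x v) (hT : 0 < T)
    (hP : P ⊆ Set.Icc 0 1) {j : ℕ} (hj : j ≤ T) :
    harmonicNum T * (1 - ‖x 0‖) ≤ fwWeight T j * (1 - ‖x j‖) := by
  induction j with
  | zero => simp [fwWeight, harmonicNum]
  | succ j ih =>
    have hS := fwWeight_pos hT (j + 1)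
    have key := mul_one_sub_norm_le (fwRatio_mem_Icc hT j) (x j)
      (norm_le_one_of_mem_box (hP (hrun.mem j hj)))
    rw [← hrun.step j hj, fwRatio_eq_div hT, div_mul_eq_mul_div, div_le_iff₀ hS] at key
    linarith [ih (by omega)]

lemma inner_sub_le (hrun : IsFrankWolfeRun P gradF T x v) {j : ℕ} (hj : j < T) {w : Fin n → ℝ}
    (hw : w ∈ P) :
    ∑ i, gradF (x j) i * (w i - x j i) ≤ ∑ i, gradF (x j) i * (v j i - x j i) := by
  simp only [mul_sub, Finset.sum_sub_distrib]
  linarith [hrun.lmo j hj w hw]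

lemma sub_two_mul_le_inner (hrun : IsFrankWolfeRun P gradF T x v) (hT : 0 < T)
    (hF : DRSubmodular F) (hnn : ∀ z ∈ Set.Icc (0 : Fin n → ℝ) 1, 0 ≤ F z)
    (hsm : SmoothOnBox F gradF L) (hP : P ⊆ Set.Icc 0 1) (hPc : Convex ℝ P) {xstar : Fin n → ℝ}
    (hxstar : xstar ∈ P) (h0 : x 0 ∈ P) {j : ℕ} (hj : j < T) :
    harmonicNum T / fwWeight T j * ((1 - ‖x 0‖) * F xstar) - 2 * F (x j)
      ≤ ∑ i, gradF (x j) i * (v j i - x j i) := by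
  have hxj := hP (hrun.mem_of_le hT hPc h0 hj.le)
  have hnorm : harmonicNum T / fwWeight T j * (1 - ‖x 0‖) ≤ 1 - ‖x j‖ := by
    rw [div_mul_eq_mul_div, div_le_iff₀ (fwWeight_pos hT j), mul_comm (1 - ‖x j‖)]
    exact hrun.harmonicNum_mul_le_fwWeight_mul hT hP hj.le
  have := mul_le_mul_of_nonneg_right hnorm (hnn xstar (hP hxstar))
  have := hF.sub_two_mul_le_inner hnn hsm hxj (hP hxstar)
  have := hrun.inner_sub_le hj hxstar
  linarith

lemma le_apply_succ (hrun : IsFrankWolfeRun P gradF T x v) (hT : 0 < T)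
    (hsm : SmoothOnBox F gradF L) (hL : 0 ≤ L) (hP : P ⊆ Set.Icc 0 1) (hPc : Convex ℝ P)
    (h0 : x 0 ∈ P) {j : ℕ} (hj : j < T) :
    F (x j) + 1 / (j + 1) / fwWeight T (j + 1) * ∑ i, gradF (x j) i * (v j i - x j i)
      - L * n / 2 * (1 / (j + 1) / fwWeight T (j + 1)) ^ 2 ≤ F (x (j + 1)) := by
  have := hsm.le_apply_combo hL (hP (hrun.mem_of_le hT hPc h0 hj.le)) (hP (hrun.mem j hj))
    (fwRatio_mem_Icc hT j)
  rw [← hrun.step j hj, one_sub_fwRatio hT] at this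
  linarith

lemma lyapunov (hrun : IsFrankWolfeRun P gradF T x v) (hT : 0 < T) (hF : DRSubmodular F)
    (hnn : ∀ z ∈ Set.Icc (0 : Fin n → ℝ) 1, 0 ≤ F z) (hsm : SmoothOnBox F gradF L) (hL : 0 ≤ L)
    (hP : P ⊆ Set.Icc 0 1) (hPc : Convex ℝ P) {xstar : Fin n → ℝ} (hxstar : xstar ∈ P)
    (h0 : x 0 ∈ P) (hsmall : ∀ j ≤ T, F (x j) ≤ (1 - ‖x 0‖) * F xstar / 2) {j : ℕ} (hj : j ≤ T) :
    harmonicNum T ^ 2 * F (x 0) + harmonicNum T * harmonicNum j * ((1 - ‖x 0‖) * F xstar)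
      - L * n / 2 * harmonicNum2 j ≤ fwWeight T j ^ 2 * F (x j) := by
  induction j with
  | zero => simp [fwWeight, harmonicNum, harmonicNum2]
  | succ j ih =>
    have hc : 0 ≤ (1 - ‖x 0‖) * F xstar :=
      mul_nonneg (sub_nonneg.2 (norm_le_one_of_mem_box (hP h0))) (hnn xstar (hP hxstar))
    have hS : fwWeight T j ≤ 2 * harmonicNum T := by
      rw [fwWeight, two_mul]; gcongr; exact harmonicNum_mono (by omega)
    have hsucc := hrun.le_apply_succ hT hsm hL hP hPc h0 hj
    rw [fwWeight_succ] at hsucc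
    have := lyapunov_step (fwWeight_pos hT j) (by positivity) hS hc (hsmall j (by omega))
      (hrun.sub_two_mul_le_inner hT hF hnn hsm hP hPc hxstar h0 hj) hsucc
    rw [fwWeight_succ, harmonicNum_succ, harmonicNum2_succ]
    rw [one_div_pow] at this
    linarith [ih (by omega)]

lemma le_apply_last (hrun : IsFrankWolfeRun P gradF T x v) (hT : 1 < T) (hF : DRSubmodular F)
    (hnn : ∀ z ∈ Set.Icc (0 : Fin n → ℝ) 1, 0 ≤ F z) (hsm : SmoothOnBox F gradF L) (hL : 0 ≤ L)
    (hP : P ⊆ Set.Icc 0 1) (hPc : Convex ℝ P) {xstar : Fin n → ℝ} (hxstar : xstar ∈ P)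
    (h0 : x 0 ∈ P) (hsmall : ∀ j ≤ T, F (x j) ≤ (1 - ‖x 0‖) * F xstar / 2) :
    1 / 4 * F (x 0) + 1 / 4 * ((1 - ‖x 0‖) * F xstar) - n * L / Real.log T ^ 2 ≤ F (x T) := by
  have hH := harmonicNum_pos (zero_lt_one.trans hT)
  have hlog : 0 < Real.log T := Real.log_pos (by exact_mod_cast hT)
  have key := hrun.lyapunov (zero_lt_one.trans hT) hF hnn hsm hL hP hPc hxstar h0 hsmall le_rfl
  rw [fwWeight, ← two_mul] at key
  have hsum := mul_le_mul_of_nonneg_left (harmonicNum2_le_two T)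
    (by positivity : 0 ≤ L * n / 2)
  have herr : L * n ≤ n * L / Real.log T ^ 2 * (4 * harmonicNum T ^ 2) := by
    rw [div_mul_eq_mul_div, le_div_iff₀ (by positivity)]
    have := pow_le_pow_left₀ hlog.le (log_le_harmonicNum T) 2
    nlinarith [mul_nonneg hL (Nat.cast_nonneg (α := ℝ) n)]
  refine le_of_mul_le_mul_left ?_ (by positivity : 0 < 4 * harmonicNum T ^ 2)
  nlinarith

end IsFrankWolfeRun

/-- With initialization `x₀ ∈ argmin_{x ∈ P} ‖x‖_∞` (dropping `0 ∈ P` and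
`F(0) = 0`), there is an absolute constant `C > 0` such that for all `T ≥ 2`,
`max_{0 ≤ j ≤ T} F(x(t_j)) - (1/4) F(x₀) ≥ (1/4)(1 - min_{x ∈ P} ‖x‖_∞) F(x*)
  - C n L / (ln T)²`.  (On `Fin n → ℝ` the default norm `‖·‖` is the sup norm.) -/
theorem fw_general_start_log_bound :
    ∃ C : ℝ, 0 < C ∧
      ∀ (n : ℕ) (F : (Fin n → ℝ) → ℝ) (gradF : (Fin n → ℝ) → Fin n → ℝ) (L : ℝ),
        0 ≤ L →
        (∀ z ∈ Set.Icc (0 : Fin n → ℝ) 1, 0 ≤ F z) →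
        DRSubmodular F →
        HasGradientOnBox F gradF →
        (∀ z ∈ Set.Icc (0 : Fin n → ℝ) 1, ∀ w ∈ Set.Icc (0 : Fin n → ℝ) 1,
          |F w - F z - ∑ i, gradF z i * (w i - z i)| ≤ L / 2 * ∑ i, (w i - z i) ^ 2) →
        ∀ P : Set (Fin n → ℝ), P ⊆ Set.Icc 0 1 → Convex ℝ P →
        ∀ xstar ∈ P, (∀ z ∈ P, F z ≤ F xstar) →
        ∀ x0 ∈ P, (∀ z ∈ P, ‖x0‖ ≤ ‖z‖) →
        ∀ T : ℕ, 2 ≤ T →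
        ∀ x v : ℕ → Fin n → ℝ,
          x 0 = x0 →
          (∀ j < T, v j ∈ P) →
          (∀ j < T, ∀ w ∈ P, ∑ i, gradF (x j) i * w i ≤ ∑ i, gradF (x j) i * v j i) →
          (∀ j < T, x (j + 1) = fwRatio T j • x j + (1 - fwRatio T j) • v j) →
          ∃ j ≤ T, F (x j) - 1 / 4 * F x0 ≥
            1 / 4 * (1 - ‖x0‖) * F xstar - C * (n : ℝ) * L / Real.log T ^ 2 := by
  refine ⟨1, one_pos, ?_⟩
  intro n F gradF L hL hnn hF _ hsm P hP hPc xstar hxstar _ x0 hx0 _ T hT x v hx00 hvP hlmo hrec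
  subst hx00
  have hrun : IsFrankWolfeRun P gradF T x v := ⟨hvP, hlmo, hrec⟩
  have hE : 0 ≤ 1 * (n : ℝ) * L / Real.log T ^ 2 := by positivity
  by_contra! hfail
  have hsmall : ∀ j ≤ T, F (x j) ≤ (1 - ‖x 0‖) * F xstar / 2 := fun j hj => by
    linarith [hfail j hj, hfail 0 (Nat.zero_le T), hnn (x 0) (hP hx0)]
  have hlast := hrun.le_apply_last hT hF hnn hsm hL hP hPc hxstar hx0 hsmall
  simp only [one_mul] at hfail
  linarith [hfail T le_rfl]
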